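/- arXiv:1803.09970 — 3 statements merged into one kernel-verified Lean document; each statement's English description precedes it below -/
import Mathlib

section
/- Let M ≥ 1 and let ζ ≥ 1 be a real number. Then for all f, y₁, y₂ ∈ ℝ^M one has the Hölder-type estimate | ‖y₁ − f‖^ζ − ‖y₂ − f‖^ζ | ≤ ζ · (‖f‖ + ‖y₁‖ + ‖y₂‖)^{ζ−1} · ‖y₁ − y₂‖, where all powers are real powers. Consequently the data-fitting integrand g(x,y) = (λ/ζ)·1_{Ω−D}(x)·|y − f(x)|^ζ satisfies the Hölder condition |g(x,y₁) − g(x,y₂)| ≤ C(|f(x)| + |y₁| + |y₂|)^{ζ−β}|y₂ − y₁|^β with β = 1 and C = λ. -/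
private lemma stmt5_key {ζ : ℝ} (hζ : 1 ≤ ζ) {a b : ℝ} (hb : 0 ≤ b) (hba : b ≤ a) :
    |a ^ ζ - b ^ ζ| ≤ ζ * a ^ (ζ - 1) * (a - b) := by
  have ha : 0 ≤ a := hb.trans hba
  have h := Convex.norm_image_sub_le_of_norm_hasDerivWithin_le
    (f := fun t : ℝ => t ^ ζ) (f' := fun t : ℝ => ζ * t ^ (ζ - 1))
    (C := ζ * a ^ (ζ - 1)) (s := Set.Icc b a)
    (fun t _ => ((Real.hasDerivAt_rpow_const (Or.inr hζ)).hasDerivWithinAt))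
    (fun t ht => by
      rw [Real.norm_eq_abs, abs_mul, abs_of_nonneg (by linarith : (0:ℝ) ≤ ζ),
        abs_of_nonneg (Real.rpow_nonneg (hb.trans ht.1) _)]
      exact mul_le_mul_of_nonneg_left
        (Real.rpow_le_rpow (hb.trans ht.1) ht.2 (by linarith)) (by linarith))
    (convex_Icc b a) ⟨le_refl b, hba⟩ ⟨hba, le_refl a⟩
  simpa [Real.norm_eq_abs, abs_of_nonneg (sub_nonneg.mpr hba)] using h

private lemma stmt5_key2 {ζ : ℝ} (hζ : 1 ≤ ζ) {a b S d : ℝ} (ha : 0 ≤ a) (hb : 0 ≤ b)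
    (haS : a ≤ S) (hbS : b ≤ S) (hd : |a - b| ≤ d) :
    |a ^ ζ - b ^ ζ| ≤ ζ * S ^ (ζ - 1) * d := by
  have hS : 0 ≤ S := ha.trans haS
  have hmono : ∀ {u : ℝ}, 0 ≤ u → u ≤ S → ζ * u ^ (ζ - 1) ≤ ζ * S ^ (ζ - 1) :=
    fun hu huS => mul_le_mul_of_nonneg_left
      (Real.rpow_le_rpow hu huS (by linarith)) (by linarith)
  rcases le_total b a with h | h
  · calc |a ^ ζ - b ^ ζ| ≤ ζ * a ^ (ζ - 1) * (a - b) := stmt5_key hζ hb h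
      _ ≤ ζ * S ^ (ζ - 1) * d := by
          apply mul_le_mul (hmono ha haS) ?_ (by linarith) ?_
          · rw [abs_of_nonneg (by linarith)] at hd; linarith
          · positivity
  · rw [abs_sub_comm]
    calc |b ^ ζ - a ^ ζ| ≤ ζ * b ^ (ζ - 1) * (b - a) := stmt5_key hζ ha h
      _ ≤ ζ * S ^ (ζ - 1) * d := by
          apply mul_le_mul (hmono hb hbS) ?_ (by linarith) ?_
          · rw [abs_sub_comm, abs_of_nonneg (by linarith)] at hd; linarith
          · positivity

/-- Hölder-type estimate for the `ζ`-th power of the norm,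
`|‖y₁−f‖^ζ − ‖y₂−f‖^ζ| ≤ ζ (‖f‖+‖y₁‖+‖y₂‖)^{ζ−1} ‖y₁−y₂‖` (real powers), and
the resulting Hölder condition, with `β = 1` and `C = λ`, for the data-fitting
integrand `g(x,y) = (λ/ζ)·1_{Ω−D}(x)·‖y − f(x)‖^ζ`. -/
theorem stmt_5 (M : ℕ) (hM : 1 ≤ M) (ζ : ℝ) (hζ : 1 ≤ ζ) :
    (∀ f y₁ y₂ : EuclideanSpace ℝ (Fin M),
      |‖y₁ - f‖ ^ ζ - ‖y₂ - f‖ ^ ζ| ≤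
        ζ * (‖f‖ + ‖y₁‖ + ‖y₂‖) ^ (ζ - 1) * ‖y₁ - y₂‖) ∧
    (∀ (X : Type) (Ω D : Set X) (lam : ℝ), 0 ≤ lam →
      ∀ (f : X → EuclideanSpace ℝ (Fin M)) (x : X)
        (y₁ y₂ : EuclideanSpace ℝ (Fin M)),
        |(Ω \ D).indicator (fun x' => lam / ζ * ‖y₁ - f x'‖ ^ ζ) x -
            (Ω \ D).indicator (fun x' => lam / ζ * ‖y₂ - f x'‖ ^ ζ) x| ≤
          lam * (‖f x‖ + ‖y₁‖ + ‖y₂‖) ^ (ζ - 1) * ‖y₂ - y₁‖ ^ (1 : ℝ)) := by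
  have main : ∀ f y₁ y₂ : EuclideanSpace ℝ (Fin M),
      |‖y₁ - f‖ ^ ζ - ‖y₂ - f‖ ^ ζ| ≤
        ζ * (‖f‖ + ‖y₁‖ + ‖y₂‖) ^ (ζ - 1) * ‖y₁ - y₂‖ := by
    intro f y₁ y₂
    apply stmt5_key2 hζ (norm_nonneg _) (norm_nonneg _)
    · calc ‖y₁ - f‖ ≤ ‖y₁‖ + ‖f‖ := norm_sub_le _ _
        _ ≤ ‖f‖ + ‖y₁‖ + ‖y₂‖ := by have := norm_nonneg y₂; linarith
    · calc ‖y₂ - f‖ ≤ ‖y₂‖ + ‖f‖ := norm_sub_le _ _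
        _ ≤ ‖f‖ + ‖y₁‖ + ‖y₂‖ := by have := norm_nonneg y₁; linarith
    · have := abs_norm_sub_norm_le (y₁ - f) (y₂ - f)
      simpa [sub_sub_sub_cancel_right] using this
  refine ⟨main, fun X Ω D lam hlam f x y₁ y₂ => ?_⟩
  have hζ0 : (0:ℝ) < ζ := by linarith
  by_cases hx : x ∈ Ω \ D
  · rw [Set.indicator_of_mem hx, Set.indicator_of_mem hx, ← mul_sub, abs_mul,
      abs_of_nonneg (by positivity : (0:ℝ) ≤ lam / ζ)]
    have h := main (f x) y₁ y₂
    calc lam / ζ * |‖y₁ - f x‖ ^ ζ - ‖y₂ - f x‖ ^ ζ|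
        ≤ lam / ζ * (ζ * (‖f x‖ + ‖y₁‖ + ‖y₂‖) ^ (ζ - 1) * ‖y₁ - y₂‖) :=
          mul_le_mul_of_nonneg_left h (by positivity)
      _ = lam * (‖f x‖ + ‖y₁‖ + ‖y₂‖) ^ (ζ - 1) * ‖y₂ - y₁‖ ^ (1:ℝ) := by
          rw [Real.rpow_one, norm_sub_rev y₂ y₁]
          field_simp
  · rw [Set.indicator_of_notMem hx, Set.indicator_of_notMem hx, sub_zero, abs_zero]
    positivity
end

section
/- Let E be a real normed vector space, let U ⊆ E be an open convex set, and let h : E → ℝ be convex on the closure of U and strictly convex on U. Then for every P ∈ U and Q ∈ closure(U) with P ≠ Q, the strict midpoint inequality holds: h((P+Q)/2) < (h(P) + h(Q))/2. -/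
/-- if `h` is convex on the closure of an open convex set `U` and
strictly convex on `U`, then the strict midpoint inequality
`h((P+Q)/2) < (h(P)+h(Q))/2` holds for `P ∈ U`, `Q ∈ closure U`, `P ≠ Q`. -/
theorem stmt_9 {E : Type*} [NormedAddCommGroup E] [NormedSpace ℝ E]
    (U : Set E) (hUopen : IsOpen U) (hUconv : Convex ℝ U)
    (h : E → ℝ)
    (hconv : ConvexOn ℝ (closure U) h)
    (hstrict : StrictConvexOn ℝ U h) :
    ∀ P ∈ U, ∀ Q ∈ closure U, P ≠ Q →
      h ((2 : ℝ)⁻¹ • (P + Q)) < (h P + h Q) / 2 := by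
  intro P hP Q hQ hPQ
  have hPint : P ∈ interior U := by rw [hUopen.interior_eq]; exact hP
  have hA : (3/4 : ℝ) • P + (1/4 : ℝ) • Q ∈ U := by
    have := hUconv.combo_interior_closure_mem_interior hPint hQ
      (by norm_num : (0:ℝ) < 3/4) (by norm_num : (0:ℝ) ≤ 1/4) (by norm_num)
    rwa [hUopen.interior_eq] at this
  have hB : (1/4 : ℝ) • P + (3/4 : ℝ) • Q ∈ U := by
    have := hUconv.combo_interior_closure_mem_interior hPint hQ
      (by norm_num : (0:ℝ) < 1/4) (by norm_num : (0:ℝ) ≤ 3/4) (by norm_num)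
    rwa [hUopen.interior_eq] at this
  have hAB : (3/4 : ℝ) • P + (1/4 : ℝ) • Q ≠ (1/4 : ℝ) • P + (3/4 : ℝ) • Q := by
    intro hEq
    apply hPQ
    have : (1/2 : ℝ) • P = (1/2 : ℝ) • Q := by
      have := congrArg (fun x => x - ((1/4 : ℝ) • P + (1/4 : ℝ) • Q)) hEq
      rw [show ((3:ℝ)/4) • P + (1/4 : ℝ) • Q - ((1/4 : ℝ) • P + (1/4 : ℝ) • Q)
          = (1/2 : ℝ) • P by module,
        show ((1:ℝ)/4) • P + (3/4 : ℝ) • Q - ((1/4 : ℝ) • P + (1/4 : ℝ) • Q)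
          = (1/2 : ℝ) • Q by module] at this
      exact this
    have := congrArg (fun x => (2:ℝ) • x) this
    simpa [smul_smul] using this
  have key := hstrict.2 hA hB hAB (by norm_num : (0:ℝ) < 1/2)
    (by norm_num : (0:ℝ) < 1/2) (by norm_num)
  have hmid : (1/2 : ℝ) • ((3/4 : ℝ) • P + (1/4 : ℝ) • Q)
      + (1/2 : ℝ) • ((1/4 : ℝ) • P + (3/4 : ℝ) • Q) = (2 : ℝ)⁻¹ • (P + Q) := by
    module
  rw [hmid] at key
  have hA' := hconv.2 (subset_closure hP) hQ
    (by norm_num : (0:ℝ) ≤ 3/4) (by norm_num : (0:ℝ) ≤ 1/4) (by norm_num)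
  have hB' := hconv.2 (subset_closure hP) hQ
    (by norm_num : (0:ℝ) ≤ 1/4) (by norm_num : (0:ℝ) ≤ 3/4) (by norm_num)
  calc h ((2 : ℝ)⁻¹ • (P + Q))
      < (1/2 : ℝ) * h ((3/4 : ℝ) • P + (1/4 : ℝ) • Q)
        + (1/2 : ℝ) * h ((1/4 : ℝ) • P + (3/4 : ℝ) • Q) := key
    _ ≤ (1/2 : ℝ) * ((3/4 : ℝ) * h P + (1/4 : ℝ) * h Q)
        + (1/2 : ℝ) * ((1/4 : ℝ) * h P + (3/4 : ℝ) * h Q) := by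
        have hA'' : h ((3/4 : ℝ) • P + (1/4 : ℝ) • Q) ≤ 3/4 * h P + 1/4 * h Q := by
          simpa [smul_eq_mul] using hA'
        have hB'' : h ((1/4 : ℝ) • P + (3/4 : ℝ) • Q) ≤ 1/4 * h P + 3/4 * h Q := by
          simpa [smul_eq_mul] using hB'
        linarith
    _ = (h P + h Q) / 2 := by ring
end

section
/- Let d ≥ 1 and μ > 1, and define F_μ : ℝ^d → ℝ by F_μ(P) = Φ_μ(‖P‖), where Φ_μ(t) = ∫₀ᵗ ∫₀ˢ (1+r)^{−μ} dr ds. Then F_μ is differentiable everywhere on ℝ^d, F_μ(0) = 0 and the derivative of F_μ at 0 vanishes, F_μ is strictly convex on ℝ^d, and the gradient is uniformly bounded: ‖∇F_μ(P)‖ < 1/(μ−1) for every P ∈ ℝ^d. (Thus the model integrand F(P) = Φ_μ(|P|) satisfies the structural hypotheses F ∈ C¹, F(0)=0, DF(0)=0, |DF(P)| ≤ ν₁ with ν₁ = 1/(μ−1), and strict convexity.) -/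
open Set Filter Topology intervalIntegral

noncomputable def stmt13_psi (μ s : ℝ) : ℝ := (1 - (1 + s) ^ (1 - μ)) / (μ - 1)

lemma stmt13_psi_contAt {μ s : ℝ} (hs : -1 < s) : ContinuousAt (stmt13_psi μ) s := by
  have h0 : (1 : ℝ) + s ≠ 0 := by linarith
  have h1 : ContinuousAt (fun x : ℝ => (1 + x) ^ (1 - μ)) s :=
    (Real.continuousAt_rpow_const (1 + s) (1 - μ) (Or.inl h0)).comp
      ((continuous_const.add continuous_id).continuousAt)
  exact (continuousAt_const.sub h1).div_const _

lemma stmt13_psi_hasDeriv {μ s : ℝ} (hμ : 1 < μ) (hs : -1 < s) :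
    HasDerivAt (stmt13_psi μ) ((1 + s) ^ (-μ)) s := by
  have h0 : (1 : ℝ) + s ≠ 0 := by linarith
  have h1 : HasDerivAt (fun x : ℝ => (1 + x) ^ (1 - μ))
      ((1 - μ) * (1 + s) ^ (1 - μ - 1) * 1) s :=
    (Real.hasDerivAt_rpow_const (p := 1 - μ) (Or.inl h0)).comp s
      ((hasDerivAt_id s).const_add 1)
  have h2 : HasDerivAt (stmt13_psi μ)
      ((0 - (1 - μ) * (1 + s) ^ (1 - μ - 1) * 1) / (μ - 1)) s :=
    ((hasDerivAt_const s 1).sub h1).div_const _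
  convert h2 using 1
  have : (1 : ℝ) - μ - 1 = -μ := by ring
  rw [this]
  have h3 : μ - 1 ≠ 0 := by linarith
  field_simp
  ring

lemma stmt13_inner_int {μ s : ℝ} (hμ : 1 < μ) (hs : -1 < s) :
    ∫ r in (0:ℝ)..s, (1 + r) ^ (-μ) = stmt13_psi μ s := by
  have hsub : uIcc (0:ℝ) s ⊆ Ioi (-1) := by
    intro r hr
    have := hr.1
    have hmin : min (0:ℝ) s > -1 := by
      rcases le_total (0:ℝ) s with h | h
      · simpa [min_eq_left h] using (by norm_num : (-1:ℝ) < 0)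
      · simpa [min_eq_right h] using hs
    exact lt_of_lt_of_le hmin this
  have hcont : ContinuousOn (fun r : ℝ => (1 + r) ^ (-μ)) (uIcc (0:ℝ) s) := by
    intro r hr
    have hr' : -1 < r := hsub hr
    have h0 : (1 : ℝ) + r ≠ 0 := by linarith
    exact ((Real.continuousAt_rpow_const (1 + r) (-μ) (Or.inl h0)).comp
      ((continuous_const.add continuous_id).continuousAt)).continuousWithinAt
  have := intervalIntegral.integral_eq_sub_of_hasDerivAt
    (f := stmt13_psi μ) (f' := fun r => (1 + r) ^ (-μ)) (a := 0) (b := s)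
    (fun r hr => stmt13_psi_hasDeriv hμ (hsub hr)) (hcont.intervalIntegrable)
  rw [this]
  have : stmt13_psi μ 0 = 0 := by simp [stmt13_psi]
  rw [this, sub_zero]

lemma stmt13_psi_zero {μ : ℝ} : stmt13_psi μ 0 = 0 := by simp [stmt13_psi]

lemma stmt13_psi_strictMono {μ : ℝ} (hμ : 1 < μ) : StrictMonoOn (stmt13_psi μ) (Ici 0) := by
  apply strictMonoOn_of_deriv_pos (convex_Ici 0)
  · exact fun x hx => (stmt13_psi_contAt (by
      have : (0:ℝ) ≤ x := hx; linarith)).continuousWithinAt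
  · intro x hx
    rw [interior_Ici] at hx
    have hx' : -1 < x := by have : (0:ℝ) < x := hx; linarith
    rw [(stmt13_psi_hasDeriv hμ hx').deriv]
    exact Real.rpow_pos_of_pos (by linarith) _

lemma stmt13_psi_nonneg {μ s : ℝ} (hμ : 1 < μ) (hs : 0 ≤ s) : 0 ≤ stmt13_psi μ s := by
  rcases eq_or_lt_of_le hs with h | h
  · rw [← h, stmt13_psi_zero]
  · have := stmt13_psi_strictMono hμ (self_mem_Ici) (le_of_lt h : (0:ℝ) ≤ s) h
    rw [stmt13_psi_zero] at this
    exact this.le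

lemma stmt13_psi_lt {μ s : ℝ} (hμ : 1 < μ) (hs : 0 ≤ s) : stmt13_psi μ s < 1 / (μ - 1) := by
  have hpos : (0:ℝ) < (1 + s) ^ (1 - μ) := Real.rpow_pos_of_pos (by linarith) _
  have hμ' : (0:ℝ) < μ - 1 := by linarith
  rw [stmt13_psi, div_lt_div_iff₀ hμ' hμ']
  nlinarith



/-- the model integrand `F_μ(P) = Φ_μ(‖P‖)` with
`Φ_μ(t) = ∫₀ᵗ ∫₀ˢ (1+r)^{−μ} dr ds`, `μ > 1`, is everywhere differentiable,
vanishes at `0` together with its derivative, is strictly convex, and has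
gradient bounded by `1/(μ−1)`. -/
theorem stmt_13 (d : ℕ) (hd : 1 ≤ d) (μ : ℝ) (hμ : 1 < μ)
    (Φ : ℝ → ℝ)
    (hΦ : ∀ t : ℝ, Φ t = ∫ s in (0 : ℝ)..t, ∫ r in (0 : ℝ)..s, (1 + r) ^ (-μ))
    (F : EuclideanSpace ℝ (Fin d) → ℝ)
    (hF : ∀ P, F P = Φ ‖P‖) :
    Differentiable ℝ F ∧
    F 0 = 0 ∧
    fderiv ℝ F 0 = 0 ∧
    StrictConvexOn ℝ Set.univ F ∧
    ∀ P : EuclideanSpace ℝ (Fin d), ‖gradient F P‖ < 1 / (μ - 1) := by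
  -- Φ in terms of ψ
  have hΦ' : ∀ t : ℝ, -1 < t → Φ t = ∫ s in (0:ℝ)..t, stmt13_psi μ s := by
    intro t ht
    rw [hΦ]
    apply intervalIntegral.integral_congr
    intro s hs
    have hmin : min (0:ℝ) t > -1 := by
      rcases le_total (0:ℝ) t with h | h
      · simpa [min_eq_left h] using (by norm_num : (-1:ℝ) < 0)
      · simpa [min_eq_right h] using ht
    exact stmt13_inner_int hμ (lt_of_lt_of_le hmin hs.1)
  have hΦ0 : Φ 0 = 0 := by
    rw [hΦ' 0 (by norm_num), intervalIntegral.integral_same]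
  -- FTC: derivative of Φ
  have hΦderiv : ∀ t : ℝ, 0 ≤ t → HasDerivAt Φ (stmt13_psi μ t) t := by
    intro t ht
    have ht' : -1 < t := by linarith
    have hsub : uIcc (0:ℝ) t ⊆ Ioi (-1) := by
      intro r hr
      have hmin : min (0:ℝ) t > -1 := by
        rcases le_total (0:ℝ) t with h | h
        · simpa [min_eq_left h] using (by norm_num : (-1:ℝ) < 0)
        · simpa [min_eq_right h] using ht'
      exact lt_of_lt_of_le hmin hr.1
    have hconP : ContinuousOn (stmt13_psi μ) (uIcc 0 t) :=
      fun r hr => (stmt13_psi_contAt (hsub hr)).continuousWithinAt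
    have hint : IntervalIntegrable (stmt13_psi μ) MeasureTheory.volume 0 t :=
      hconP.intervalIntegrable
    have hmeas : StronglyMeasurableAtFilter (stmt13_psi μ) (𝓝 t) :=
      ContinuousOn.stronglyMeasurableAtFilter isOpen_Ioi
        (fun x hx => (stmt13_psi_contAt hx).continuousWithinAt) _ ht'
    have h1 : HasDerivAt (fun u => ∫ s in (0:ℝ)..u, stmt13_psi μ s) (stmt13_psi μ t) t :=
      intervalIntegral.integral_hasDerivAt_right hint hmeas (stmt13_psi_contAt ht')
    apply h1.congr_of_eventuallyEq
    filter_upwards [isOpen_Ioi.mem_nhds ht'] with u hu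
    exact hΦ' u hu
  have hΦcont : ContinuousOn Φ (Ici 0) :=
    fun t ht => (hΦderiv t ht).continuousAt.continuousWithinAt
  -- Φ strictly monotone on [0,∞)
  have hΦmono : StrictMonoOn Φ (Ici 0) := by
    apply strictMonoOn_of_deriv_pos (convex_Ici 0) hΦcont
    intro x hx
    rw [interior_Ici] at hx
    rw [(hΦderiv x (le_of_lt hx)).deriv]
    have := stmt13_psi_strictMono hμ self_mem_Ici (le_of_lt hx : (0:ℝ) ≤ x) hx
    rw [stmt13_psi_zero] at this
    exact this
  -- Φ strictly convex on [0,∞)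
  have hΦconv : StrictConvexOn ℝ (Ici 0) Φ := by
    apply StrictMonoOn.strictConvexOn_of_deriv (convex_Ici 0) hΦcont
    intro a ha b hb hab
    rw [interior_Ici] at ha hb
    rw [(hΦderiv a (le_of_lt ha)).deriv, (hΦderiv b (le_of_lt hb)).deriv]
    exact stmt13_psi_strictMono hμ (mem_Ici.mpr (le_of_lt ha)) (mem_Ici.mpr (le_of_lt hb)) hab
  -- bound on Φ near 0
  have hΦbound : ∀ t : ℝ, 0 ≤ t → ‖Φ t‖ ≤ stmt13_psi μ t * t := by
    intro t ht
    rw [hΦ' t (by linarith)]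
    have := intervalIntegral.norm_integral_le_of_norm_le_const
      (a := 0) (b := t) (C := stmt13_psi μ t) (f := stmt13_psi μ) ?_
    · calc ‖∫ s in (0:ℝ)..t, stmt13_psi μ s‖ ≤ stmt13_psi μ t * |t - 0| := this
        _ = stmt13_psi μ t * t := by rw [sub_zero, abs_of_nonneg ht]
    · intro x hx
      rw [Set.uIoc_of_le ht] at hx
      rw [Real.norm_eq_abs, abs_of_nonneg (stmt13_psi_nonneg hμ hx.1.le)]
      rcases eq_or_lt_of_le hx.2 with h | h
      · rw [h]
      · exact ((stmt13_psi_strictMono hμ) (le_of_lt hx.1) (by exact le_trans hx.1.le hx.2) h).le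
  -- derivative of F at 0
  have hFeq : F = fun Q => Φ ‖Q‖ := funext hF
  have hF0 : HasFDerivAt F (0 : EuclideanSpace ℝ (Fin d) →L[ℝ] ℝ) 0 := by
    rw [hasFDerivAt_iff_isLittleO_nhds_zero]
    rw [Asymptotics.isLittleO_iff]
    intro c hc
    have htend : Tendsto (fun h : EuclideanSpace ℝ (Fin d) => stmt13_psi μ ‖h‖) (𝓝 0) (𝓝 0) := by
      have h1 : Tendsto (fun h : EuclideanSpace ℝ (Fin d) => ‖h‖) (𝓝 0) (𝓝 0) := by
        simpa using (continuous_norm.tendsto (0 : EuclideanSpace ℝ (Fin d)))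
      have h2 : Tendsto (stmt13_psi μ) (𝓝 0) (𝓝 0) := by
        simpa [stmt13_psi_zero] using (stmt13_psi_contAt (μ := μ) (by norm_num : (-1:ℝ) < 0)).tendsto
      exact h2.comp h1
    filter_upwards [htend.eventually_lt_const hc] with h hh
    have hn : (0:ℝ) ≤ ‖h‖ := norm_nonneg h
    simp only [hFeq, zero_add, norm_zero, hΦ0, sub_zero, ContinuousLinearMap.zero_apply]
    calc ‖Φ ‖h‖‖ ≤ stmt13_psi μ ‖h‖ * ‖h‖ := hΦbound _ hn
      _ ≤ c * ‖h‖ := by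
          apply mul_le_mul_of_nonneg_right hh.le hn
  -- differentiability off 0
  have hFdiff : ∀ P : EuclideanSpace ℝ (Fin d), P ≠ 0 →
      HasFDerivAt F (stmt13_psi μ ‖P‖ • fderiv ℝ (fun Q : EuclideanSpace ℝ (Fin d) => ‖Q‖) P) P := by
    intro P hP
    have hnorm : DifferentiableAt ℝ (fun Q : EuclideanSpace ℝ (Fin d) => ‖Q‖) P :=
      ((contDiffAt_norm ℝ (n := 1) hP).differentiableAt one_ne_zero)
    have := (hΦderiv ‖P‖ (norm_nonneg P)).comp_hasFDerivAt P hnorm.hasFDerivAt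
    rw [hFeq]
    exact this
  have hdiff : Differentiable ℝ F := by
    intro P
    by_cases hP : P = 0
    · rw [hP]; exact hF0.differentiableAt
    · exact (hFdiff P hP).differentiableAt
  refine ⟨hdiff, by rw [hF, norm_zero, hΦ0], hF0.fderiv, ?_, ?_⟩
  · -- strict convexity
    refine ⟨convex_univ, ?_⟩
    intro x _ y _ hxy a b ha hb hab
    simp only [smul_eq_mul, hF]
    have hax : ‖a • x‖ = a * ‖x‖ := by rw [norm_smul, Real.norm_eq_abs, abs_of_pos ha]
    have hby : ‖b • y‖ = b * ‖y‖ := by rw [norm_smul, Real.norm_eq_abs, abs_of_pos hb]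
    have hn : ‖a • x + b • y‖ ≤ a * ‖x‖ + b * ‖y‖ := by
      calc ‖a • x + b • y‖ ≤ ‖a • x‖ + ‖b • y‖ := norm_add_le _ _
        _ = a * ‖x‖ + b * ‖y‖ := by rw [hax, hby]
    by_cases hne : ‖x‖ = ‖y‖
    · have hlt : ‖a • x + b • y‖ < ‖x‖ :=
        norm_combo_lt_of_ne le_rfl (le_of_eq hne.symm) hxy ha hb hab
      have h1 : Φ ‖a • x + b • y‖ < Φ ‖x‖ :=
        hΦmono (norm_nonneg _) (norm_nonneg x) hlt
      have h2 : a * Φ ‖x‖ + b * Φ ‖y‖ = Φ ‖x‖ := by rw [← hne, ← add_mul, hab, one_mul]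
      linarith
    · have h1 : Φ ‖a • x + b • y‖ ≤ Φ (a * ‖x‖ + b * ‖y‖) :=
        hΦmono.monotoneOn (norm_nonneg _) (Set.mem_Ici.mpr (by positivity)) hn
      have h2 := hΦconv.2 (norm_nonneg x) (norm_nonneg y) hne ha hb hab
      simp only [smul_eq_mul] at h2
      linarith
  · -- gradient bound
    intro P
    have hμ1 : (0:ℝ) < μ - 1 := by linarith
    have hpos : (0:ℝ) < 1 / (μ - 1) := by positivity
    have hgrad : ‖gradient F P‖ = ‖fderiv ℝ F P‖ := by
      rw [gradient, LinearIsometryEquiv.norm_map]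
    by_cases hP : P = 0
    · rw [hgrad, hP, hF0.fderiv]
      simpa using hpos
    · rw [hgrad, (hFdiff P hP).fderiv]
      have hlip : ‖fderiv ℝ (fun Q : EuclideanSpace ℝ (Fin d) => ‖Q‖) P‖ ≤ 1 := by
        simpa using norm_fderiv_le_of_lipschitz ℝ
          (lipschitzWith_one_norm (E := EuclideanSpace ℝ (Fin d)))
      calc ‖stmt13_psi μ ‖P‖ • fderiv ℝ (fun Q : EuclideanSpace ℝ (Fin d) => ‖Q‖) P‖
          = |stmt13_psi μ ‖P‖| * ‖fderiv ℝ (fun Q : EuclideanSpace ℝ (Fin d) => ‖Q‖) P‖ := by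
            rw [norm_smul, Real.norm_eq_abs]
        _ ≤ stmt13_psi μ ‖P‖ * 1 := by
            rw [abs_of_nonneg (stmt13_psi_nonneg hμ (norm_nonneg P))]
            exact mul_le_mul_of_nonneg_left hlip (stmt13_psi_nonneg hμ (norm_nonneg P))
        _ < 1 / (μ - 1) := by rw [mul_one]; exact stmt13_psi_lt hμ (norm_nonneg P)
end
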